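/- arXiv:2409.04067 — 7 statements merged into one kernel-verified Lean document; each statement's English description precedes it below -/
import Mathlib

section
/- Under the stated hypotheses, the matrix P = Cᵀ·C is a projection operator, i.e. P² = P. -/
open Matrix

/-!
`P = Cᵀ C` is idempotent as soon as `C Cᵀ = 1`, i.e. as soon as `C` has orthonormal rows. Writing
`C = M⁻¹ K` with `K = B (Lᵀ)⁻¹`, the hypothesis reads `M Mᵀ = K Kᵀ`, so
`C Cᵀ = M⁻¹ (K Kᵀ) (Mᵀ)⁻¹ = M⁻¹ (M Mᵀ) (Mᵀ)⁻¹ = 1`.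
-/

namespace Matrix

variable {m n R : Type*} [Fintype m] [Fintype n] [DecidableEq m]

theorem isIdempotentElem_mul_of_mul_eq_one [Semiring R] {A : Matrix m n R} {D : Matrix n m R}
    (h : A * D = 1) : IsIdempotentElem (D * A) := by
  rw [IsIdempotentElem, Matrix.mul_assoc, ← Matrix.mul_assoc A, h, Matrix.one_mul]

theorem inv_mul_mul_transpose_inv_mul_eq_one [CommRing R] {M : Matrix m m R} {K : Matrix m n R}
    (hM : IsUnit M) (h : M * Mᵀ = K * Kᵀ) : M⁻¹ * K * (M⁻¹ * K)ᵀ = 1 := by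
  have hMdet : IsUnit M.det := (isUnit_iff_isUnit_det M).mp hM
  have hMtdet : IsUnit Mᵀ.det := by rwa [det_transpose]
  calc M⁻¹ * K * (M⁻¹ * K)ᵀ = M⁻¹ * (K * Kᵀ) * Mᵀ⁻¹ := by
        simp only [transpose_mul, transpose_nonsing_inv, Matrix.mul_assoc]
    _ = 1 := by
        rw [← h, nonsing_inv_mul_cancel_left _ _ hMdet, mul_nonsing_inv _ hMtdet]

end Matrix

theorem stmt_2_general (n p : ℕ) (L : Matrix (Fin n) (Fin n) ℝ) (M : Matrix (Fin p) (Fin p) ℝ)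
    (B : Matrix (Fin p) (Fin n) ℝ) (hM : IsUnit M)
    (hS : M * Mᵀ = B * Lᵀ⁻¹ * L⁻¹ * Bᵀ)
    (C : Matrix (Fin p) (Fin n) ℝ) (hC : C = M⁻¹ * B * Lᵀ⁻¹)
    (P : Matrix (Fin n) (Fin n) ℝ) (hP : P = Cᵀ * C) :
    P ^ 2 = P := by
  have hK : M * Mᵀ = B * Lᵀ⁻¹ * (B * Lᵀ⁻¹)ᵀ := by
    rw [hS, transpose_mul, ← transpose_nonsing_inv, transpose_transpose, Matrix.mul_assoc]
  have hCCt : C * Cᵀ = 1 := by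
    rw [hC, Matrix.mul_assoc M⁻¹]
    exact inv_mul_mul_transpose_inv_mul_eq_one hM hK
  rw [hP, sq]
  exact isIdempotentElem_mul_of_mul_eq_one hCCt

/-- With `C = M⁻¹ * B * (Lᵀ)⁻¹`, the matrix `P = Cᵀ * C` is a projection: `P ^ 2 = P`. -/
theorem stmt_2 (n p : ℕ) (L : Matrix (Fin n) (Fin n) ℝ) (M : Matrix (Fin p) (Fin p) ℝ)
    (B : Matrix (Fin p) (Fin n) ℝ) (hL : IsUnit L) (hM : IsUnit M)
    (hS : M * Mᵀ = B * Lᵀ⁻¹ * L⁻¹ * Bᵀ)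
    (C : Matrix (Fin p) (Fin n) ℝ) (hC : C = M⁻¹ * B * Lᵀ⁻¹)
    (P : Matrix (Fin n) (Fin n) ℝ) (hP : P = Cᵀ * C) :
    P ^ 2 = P :=
  stmt_2_general n p L M B hM hS C hC P hP
end

section
/- Under the stated hypotheses, (Y − (3/2)·I)² equals the block matrix [[(P − (1/2)·I)² + P, 0], [0, (5/4)·I]], where P = Cᵀ·C. -/
/-!
Since `C Cᵀ = M⁻¹ (B L⁻ᵀ L⁻¹ Bᵀ) M⁻ᵀ = M⁻¹ (M Mᵀ) M⁻ᵀ = I`, the matrix `C` has orthonormal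
rows, so `P = Cᵀ C` is a projection with `P Cᵀ = Cᵀ`. Then `Y = [[I + P, Cᵀ], [C, I]]`, and
squaring `Y - (3/2) I = [[P - I/2, Cᵀ], [C, -I/2]]` blockwise, the off-diagonal blocks
`P Cᵀ - Cᵀ` vanish and the lower block is `C Cᵀ + I/4 = (5/4) I`.
-/

open Matrix

namespace Matrix

variable {m n R : Type*}

theorem fromBlocks_sub [AddGroup R] (A : Matrix n n R) (B : Matrix n m R) (C : Matrix m n R)
    (D : Matrix m m R) (A' : Matrix n n R) (B' : Matrix n m R) (C' : Matrix m n R)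
    (D' : Matrix m m R) :
    fromBlocks A B C D - fromBlocks A' B' C' D' =
      fromBlocks (A - A') (B - B') (C - C') (D - D') := by
  simp only [sub_eq_add_neg, fromBlocks_neg, fromBlocks_add]

variable [Fintype m] [Fintype n] [DecidableEq m] [DecidableEq n]

theorem mul_transpose_eq_one_of_mul_transpose_eq [CommRing R] {L : Matrix n n R}
    {M : Matrix m m R} {B C : Matrix m n R} (hM : IsUnit M)
    (hS : M * Mᵀ = B * Lᵀ⁻¹ * L⁻¹ * Bᵀ) (hC : C = M⁻¹ * B * Lᵀ⁻¹) : C * Cᵀ = 1 := by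
  have hMdet : IsUnit M.det := (isUnit_iff_isUnit_det M).mp hM
  calc C * Cᵀ = M⁻¹ * (B * Lᵀ⁻¹ * L⁻¹ * Bᵀ) * Mᵀ⁻¹ := by
        simp only [hC, transpose_mul, transpose_nonsing_inv, transpose_transpose, Matrix.mul_assoc]
    _ = (M⁻¹ * M) * (Mᵀ * Mᵀ⁻¹) := by rw [← hS]; simp only [Matrix.mul_assoc]
    _ = 1 := by
        rw [nonsing_inv_mul M hMdet, mul_nonsing_inv Mᵀ (by simpa using hMdet), one_mul]

theorem fromBlocks_one_transpose_zero_sq [Semiring R] {C : Matrix m n R} (hC : C * Cᵀ = 1) :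
    fromBlocks 1 Cᵀ C 0 ^ 2 = fromBlocks (1 + Cᵀ * C) Cᵀ C 1 := by
  simp [sq, fromBlocks_multiply, hC]

theorem fromBlocks_sub_three_halves_sq [Field R] [CharZero R] {C : Matrix m n R}
    (hC : C * Cᵀ = 1) :
    (fromBlocks (1 + Cᵀ * C) Cᵀ C 1 - ((3 : R) / 2) • 1) ^ 2 =
      fromBlocks ((Cᵀ * C - ((1 : R) / 2) • 1) ^ 2 + Cᵀ * C) 0 0 (((5 : R) / 4) • 1) := by
  set P := Cᵀ * C
  have hPC : P * Cᵀ = Cᵀ := by rw [Matrix.mul_assoc, hC, Matrix.mul_one]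
  have hCP : C * P = C := by rw [← Matrix.mul_assoc, hC, Matrix.one_mul]
  have hshift : fromBlocks (1 + P) Cᵀ C 1 - ((3 : R) / 2) • 1 =
      fromBlocks (P - ((1 : R) / 2) • 1) Cᵀ C (-(((1 : R) / 2) • 1)) := by
    rw [← fromBlocks_one, fromBlocks_smul, fromBlocks_sub]
    congr 1 <;> module
  rw [hshift, sq, fromBlocks_multiply, hC, ← sq]
  congr 1
  · simp only [Matrix.sub_mul, hPC, Matrix.smul_mul, Matrix.one_mul, Matrix.mul_neg,
      Matrix.mul_smul, Matrix.mul_one]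
    module
  · simp only [Matrix.mul_sub, hCP, Matrix.smul_mul, Matrix.one_mul, Matrix.neg_mul,
      Matrix.mul_smul, Matrix.mul_one]
    module
  · simp only [neg_mul_neg, Matrix.smul_mul, Matrix.mul_smul, Matrix.one_mul]
    module

end Matrix

theorem stmt_5_general (n p : ℕ) (L : Matrix (Fin n) (Fin n) ℝ) (M : Matrix (Fin p) (Fin p) ℝ)
    (B : Matrix (Fin p) (Fin n) ℝ) (hM : IsUnit M)
    (hS : M * Mᵀ = B * Lᵀ⁻¹ * L⁻¹ * Bᵀ)
    (C : Matrix (Fin p) (Fin n) ℝ) (hC : C = M⁻¹ * B * Lᵀ⁻¹)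
    (P : Matrix (Fin n) (Fin n) ℝ) (hP : P = Cᵀ * C)
    (Z : Matrix (Fin n ⊕ Fin p) (Fin n ⊕ Fin p) ℝ) (hZ : Z = fromBlocks 1 Cᵀ C 0)
    (Y : Matrix (Fin n ⊕ Fin p) (Fin n ⊕ Fin p) ℝ) (hY : Y = Z ^ 2) :
    (Y - ((3 : ℝ) / 2) • 1) ^ 2 =
      fromBlocks ((P - ((1 : ℝ) / 2) • 1) ^ 2 + P) 0 0 (((5 : ℝ) / 4) • 1) := by
  have hCC : C * Cᵀ = 1 := mul_transpose_eq_one_of_mul_transpose_eq hM hS hC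
  rw [hY, hZ, fromBlocks_one_transpose_zero_sq hCC, fromBlocks_sub_three_halves_sq hCC, hP]

/-- With `Z = [[I, Cᵀ], [C, 0]]`, `Y = Z²`, and `P = Cᵀ * C`, one has
`(Y - (3/2)·I)² = [[(P - (1/2)·I)² + P, 0], [0, (5/4)·I]]`. -/
theorem stmt_5 (n p : ℕ) (L : Matrix (Fin n) (Fin n) ℝ) (M : Matrix (Fin p) (Fin p) ℝ)
    (B : Matrix (Fin p) (Fin n) ℝ) (hL : IsUnit L) (hM : IsUnit M)
    (hS : M * Mᵀ = B * Lᵀ⁻¹ * L⁻¹ * Bᵀ)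
    (C : Matrix (Fin p) (Fin n) ℝ) (hC : C = M⁻¹ * B * Lᵀ⁻¹)
    (P : Matrix (Fin n) (Fin n) ℝ) (hP : P = Cᵀ * C)
    (Z : Matrix (Fin n ⊕ Fin p) (Fin n ⊕ Fin p) ℝ) (hZ : Z = fromBlocks 1 Cᵀ C 0)
    (Y : Matrix (Fin n ⊕ Fin p) (Fin n ⊕ Fin p) ℝ) (hY : Y = Z ^ 2) :
    (Y - ((3 : ℝ) / 2) • 1) ^ 2 =
      fromBlocks ((P - ((1 : ℝ) / 2) • 1) ^ 2 + P) 0 0 (((5 : ℝ) / 4) • 1) :=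
  stmt_5_general n p L M B hM hS C hC P hP Z hZ Y hY
end

section
/- Under the stated hypotheses, (Y − (3/2)·I)² − (5/4)·I equals the block matrix [[P − I, 0], [0, 0]], where P = Cᵀ·C. -/
/-!
Since `M Mᵀ = (B L⁻ᵀ)(B L⁻ᵀ)ᵀ`, the matrix `C = M⁻¹ B L⁻ᵀ` has orthonormal rows: `C Cᵀ = I`.
Hence `P = Cᵀ C` is idempotent and `Y = Z² = [[I + P, Cᵀ], [C, I]]`, and a blockwise computation
gives `Y² - 3Y + I = [[P - I, 0], [0, 0]]`; the left-hand side of the claim is `Y² - 3Y + I`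
after completing the square.
-/

open Matrix

section

variable {m n R : Type*} [Fintype m] [Fintype n] [DecidableEq m] [DecidableEq n] [CommRing R]

omit [DecidableEq n] in
theorem Matrix.inv_mul_mul_transpose_eq_one {M : Matrix m m R} {G : Matrix m n R}
    (hM : IsUnit M) (h : M * Mᵀ = G * Gᵀ) : M⁻¹ * G * (M⁻¹ * G)ᵀ = 1 := by
  have hdet : IsUnit M.det := (isUnit_iff_isUnit_det M).mp hM
  calc M⁻¹ * G * (M⁻¹ * G)ᵀ = M⁻¹ * (M * Mᵀ) * Mᵀ⁻¹ := by
        rw [h, transpose_mul, transpose_nonsing_inv]; simp only [Matrix.mul_assoc]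
    _ = 1 := by
      rw [← Matrix.mul_assoc, nonsing_inv_mul _ hdet, Matrix.one_mul,
        mul_nonsing_inv _ (by rwa [det_transpose])]

theorem Matrix.fromBlocks_one_transpose_zero_sq_s6 {C : Matrix m n R} (hC : C * Cᵀ = 1) :
    fromBlocks 1 Cᵀ C 0 ^ 2 = fromBlocks (1 + Cᵀ * C) Cᵀ C 1 := by
  simp [sq, fromBlocks_multiply, hC]

theorem Matrix.fromBlocks_sq_sub_three_smul_add_one {C : Matrix m n R} (hC : C * Cᵀ = 1) :
    fromBlocks (1 + Cᵀ * C) Cᵀ C 1 ^ 2 - (3 : R) • fromBlocks (1 + Cᵀ * C) Cᵀ C 1 + 1 =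
      fromBlocks (Cᵀ * C - 1) 0 0 0 := by
  have hPP : Cᵀ * C * (Cᵀ * C) = Cᵀ * C := by
    rw [Matrix.mul_assoc, ← Matrix.mul_assoc C, hC, Matrix.one_mul]
  have hCP : C * (Cᵀ * C) = C := by rw [← Matrix.mul_assoc, hC, Matrix.one_mul]
  have hPC : Cᵀ * C * Cᵀ = Cᵀ := by rw [Matrix.mul_assoc, hC, Matrix.mul_one]
  simp only [sq, fromBlocks_multiply, ← fromBlocks_one, fromBlocks_smul, sub_eq_add_neg,
    fromBlocks_neg, fromBlocks_add]
  congr 1 <;>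
    simp only [Matrix.add_mul, Matrix.mul_add, Matrix.one_mul, Matrix.mul_one, hPP, hPC, hCP,
      hC] <;>
    module

end

theorem sub_three_halves_smul_sq_sub_five_quarters_smul {K A : Type*} [Field K] [Ring A]
    [Algebra K A] (h2 : (2 : K) ≠ 0) (y : A) :
    (y - (3 / 2 : K) • 1) ^ 2 - (5 / 4 : K) • 1 = y ^ 2 - (3 : K) • y + 1 := by
  have h4 : (4 : K) ≠ 0 := by have := mul_ne_zero h2 h2; norm_num at this; exact this
  have h3 : (3 / 2 : K) + 3 / 2 = 3 := by field_simp; norm_num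
  have h1 : (3 / 2 : K) * (3 / 2) - 5 / 4 = 1 := by field_simp; norm_num
  simp only [sq, sub_mul, mul_sub, smul_mul_assoc, mul_smul_comm, one_mul, mul_one]
  linear_combination (norm := module) h1 • (1 : A) - h3 • y

theorem stmt_6_general (n p : ℕ) (L : Matrix (Fin n) (Fin n) ℝ) (M : Matrix (Fin p) (Fin p) ℝ)
    (B : Matrix (Fin p) (Fin n) ℝ) (hM : IsUnit M)
    (hS : M * Mᵀ = B * Lᵀ⁻¹ * L⁻¹ * Bᵀ)
    (C : Matrix (Fin p) (Fin n) ℝ) (hC : C = M⁻¹ * B * Lᵀ⁻¹)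
    (P : Matrix (Fin n) (Fin n) ℝ) (hP : P = Cᵀ * C)
    (Z : Matrix (Fin n ⊕ Fin p) (Fin n ⊕ Fin p) ℝ) (hZ : Z = fromBlocks 1 Cᵀ C 0)
    (Y : Matrix (Fin n ⊕ Fin p) (Fin n ⊕ Fin p) ℝ) (hY : Y = Z ^ 2) :
    (Y - ((3 : ℝ) / 2) • 1) ^ 2 - ((5 : ℝ) / 4) • 1 = fromBlocks (P - 1) 0 0 0 := by
  have hCC : C * Cᵀ = 1 := by
    have hG : M * Mᵀ = B * Lᵀ⁻¹ * (B * Lᵀ⁻¹)ᵀ := by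
      rw [hS, transpose_mul, transpose_nonsing_inv, transpose_transpose]
      simp only [Matrix.mul_assoc]
    simpa only [← Matrix.mul_assoc, ← hC] using inv_mul_mul_transpose_eq_one hM hG
  rw [sub_three_halves_smul_sq_sub_five_quarters_smul (two_ne_zero : (2 : ℝ) ≠ 0), hY, hZ,
    fromBlocks_one_transpose_zero_sq_s6 hCC, fromBlocks_sq_sub_three_smul_add_one hCC, hP]

/-- With `Z = [[I, Cᵀ], [C, 0]]`, `Y = Z²`, and `P = Cᵀ * C`, one has
`(Y - (3/2)·I)² - (5/4)·I = [[P - I, 0], [0, 0]]`. -/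
theorem stmt_6 (n p : ℕ) (L : Matrix (Fin n) (Fin n) ℝ) (M : Matrix (Fin p) (Fin p) ℝ)
    (B : Matrix (Fin p) (Fin n) ℝ) (hL : IsUnit L) (hM : IsUnit M)
    (hS : M * Mᵀ = B * Lᵀ⁻¹ * L⁻¹ * Bᵀ)
    (C : Matrix (Fin p) (Fin n) ℝ) (hC : C = M⁻¹ * B * Lᵀ⁻¹)
    (P : Matrix (Fin n) (Fin n) ℝ) (hP : P = Cᵀ * C)
    (Z : Matrix (Fin n ⊕ Fin p) (Fin n ⊕ Fin p) ℝ) (hZ : Z = fromBlocks 1 Cᵀ C 0)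
    (Y : Matrix (Fin n ⊕ Fin p) (Fin n ⊕ Fin p) ℝ) (hY : Y = Z ^ 2) :
    (Y - ((3 : ℝ) / 2) • 1) ^ 2 - ((5 : ℝ) / 4) • 1 = fromBlocks (P - 1) 0 0 0 :=
  stmt_6_general n p L M B hM hS C hC P hP Z hZ Y hY
end

section
/- Under the stated hypotheses, every real eigenvalue of the symmetric matrix Y = Z² lies in the three-element set {1, (3 + √5)/2, (3 − √5)/2}; in particular Y has at most three distinct eigenvalues. -/
/-!
The Cholesky relation says exactly that `C` has orthonormal rows, `C * Cᵀ = 1`. Block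
multiplication then gives `Z³ = 2Z² - 1`, i.e. `Z` is annihilated by `(X - 1)(X² - X - 1)`, whose
roots are `1` and `(1 ± √5)/2`. Consequently `Y = Z²` is annihilated by
`(X - 1)(X² - 3X + 1)`, whose roots are `1` and `(3 ± √5)/2`, and every eigenvalue of `Y` is one
of these.
-/

open Matrix Polynomial

section

variable {m n : Type*} [Fintype m] [DecidableEq m] [Fintype n] [DecidableEq n]

theorem cholesky_factor_mul_transpose_eq_one {R : Type*} [CommRing R] {L : Matrix n n R}
    {M : Matrix m m R} {B : Matrix m n R} (hM : IsUnit M) (hS : M * Mᵀ = B * Lᵀ⁻¹ * L⁻¹ * Bᵀ) :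
    M⁻¹ * B * Lᵀ⁻¹ * (M⁻¹ * B * Lᵀ⁻¹)ᵀ = 1 := by
  have hMd : IsUnit M.det := (isUnit_iff_isUnit_det M).mp hM
  calc M⁻¹ * B * Lᵀ⁻¹ * (M⁻¹ * B * Lᵀ⁻¹)ᵀ = M⁻¹ * (B * Lᵀ⁻¹ * L⁻¹ * Bᵀ) * Mᵀ⁻¹ := by
        simp only [transpose_mul, transpose_nonsing_inv, transpose_transpose, Matrix.mul_assoc]
    _ = 1 := by
        rw [← hS, Matrix.mul_assoc,
          Matrix.mul_nonsing_inv_cancel_right _ _ (by rwa [det_transpose]), nonsing_inv_mul _ hMd]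

theorem Matrix.fromBlocks_one_zero_pow_three {R : Type*} [Ring R] {C : Matrix m n R}
    {D : Matrix n m R} (hCD : C * D = 1) :
    fromBlocks 1 D C 0 ^ 3 = 2 * fromBlocks 1 D C 0 ^ 2 - 1 := by
  refine eq_sub_of_add_eq ?_
  rw [pow_succ, sq, two_mul, fromBlocks_multiply, fromBlocks_multiply, ← fromBlocks_one,
    fromBlocks_add, fromBlocks_add]
  simp only [hCD, Matrix.mul_one, Matrix.one_mul, Matrix.mul_zero, Matrix.zero_mul, add_zero,
    Matrix.add_mul, Matrix.mul_assoc]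
  abel_nf

theorem Matrix.eval_eq_zero_of_aeval_eq_zero {R : Type*} [CommRing R] [IsDomain R]
    {A : Matrix n n R} {q : R[X]} (hq : aeval A q = 0) {μ : R} {v : n → R}
    (hv : v ≠ 0) (hAv : A *ᵥ v = μ • v) : q.eval μ = 0 := by
  have h := Module.End.aeval_apply_of_mem_apply_eq_smul (f := toLin' A) (p := q)
    (by rwa [toLin'_apply])
  have hq' : aeval (toLin' A) q = 0 := by
    change aeval (toLinAlgEquiv' A) q = 0
    rw [← AlgEquiv.coe_toAlgHom, aeval_algHom_apply, hq, map_zero]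
  rw [hq', LinearMap.zero_apply] at h
  exact (smul_eq_zero.mp h.symm).resolve_right hv

end

theorem sq_sub_one_mul_eq_zero_of_pow_three_eq {R : Type*} [Ring R] {a : R}
    (h : a ^ 3 = 2 * a ^ 2 - 1) : (a ^ 2 - 1) * ((a ^ 2) ^ 2 - 3 * a ^ 2 + 1) = 0 := by
  have factor : (a ^ 2 - 1) * ((a ^ 2) ^ 2 - 3 * a ^ 2 + 1) =
      (a + 1) * (a ^ 3 - (2 * a ^ 2 - 1)) * (a ^ 2 + a - 1) := by noncomm_ring
  rw [factor, h, sub_self, mul_zero, zero_mul]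

theorem mem_of_sub_one_mul_quadratic_eq_zero {μ : ℝ} (h : (μ - 1) * (μ ^ 2 - 3 * μ + 1) = 0) :
    μ ∈ ({1, (3 + Real.sqrt 5) / 2, (3 - Real.sqrt 5) / 2} : Set ℝ) := by
  have h5 : Real.sqrt 5 ^ 2 = 5 := Real.sq_sqrt (by norm_num)
  have roots : (μ - 1) * (μ - (3 + Real.sqrt 5) / 2) * (μ - (3 - Real.sqrt 5) / 2) = 0 := by
    linear_combination h - (μ - 1) / 4 * h5
  simp only [Set.mem_insert_iff, Set.mem_singleton_iff]
  rcases mul_eq_zero.mp roots with h | h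
  · rcases mul_eq_zero.mp h with h | h
    · exact .inl (sub_eq_zero.mp h)
    · exact .inr (.inl (sub_eq_zero.mp h))
  · exact .inr (.inr (sub_eq_zero.mp h))

theorem stmt_9_general (n p : ℕ) (L : Matrix (Fin n) (Fin n) ℝ) (M : Matrix (Fin p) (Fin p) ℝ)
    (B : Matrix (Fin p) (Fin n) ℝ) (hM : IsUnit M)
    (hS : M * Mᵀ = B * Lᵀ⁻¹ * L⁻¹ * Bᵀ)
    (C : Matrix (Fin p) (Fin n) ℝ) (hC : C = M⁻¹ * B * Lᵀ⁻¹)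
    (Z : Matrix (Fin n ⊕ Fin p) (Fin n ⊕ Fin p) ℝ) (hZ : Z = fromBlocks 1 Cᵀ C 0)
    (Y : Matrix (Fin n ⊕ Fin p) (Fin n ⊕ Fin p) ℝ) (hY : Y = Z ^ 2) :
    ∀ μ : ℝ, (∃ v : Fin n ⊕ Fin p → ℝ, v ≠ 0 ∧ Y.mulVec v = μ • v) →
      μ ∈ ({1, (3 + Real.sqrt 5) / 2, (3 - Real.sqrt 5) / 2} : Set ℝ) := by
  rintro μ ⟨v, hv, hYv⟩
  have hCC : C * Cᵀ = 1 := hC ▸ cholesky_factor_mul_transpose_eq_one hM hS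
  have hZ3 : Z ^ 3 = 2 * Z ^ 2 - 1 := hZ ▸ fromBlocks_one_zero_pow_three hCC
  have hYq : aeval Y ((X - 1 : ℝ[X]) * (X ^ 2 - 3 * X + 1)) = 0 := by
    simpa only [hY, map_mul, map_sub, map_add, map_pow, map_one, map_ofNat, aeval_X] using
      sq_sub_one_mul_eq_zero_of_pow_three_eq hZ3
  apply mem_of_sub_one_mul_quadratic_eq_zero
  simpa using eval_eq_zero_of_aeval_eq_zero hYq hv hYv

/-- Every real eigenvalue of the symmetric matrix `Y = Z²` lies in the three-element set
`{1, (3 + √5)/2, (3 - √5)/2}`; in particular `Y` has at most three distinct eigenvalues. -/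
theorem stmt_9 (n p : ℕ) (L : Matrix (Fin n) (Fin n) ℝ) (M : Matrix (Fin p) (Fin p) ℝ)
    (B : Matrix (Fin p) (Fin n) ℝ) (hL : IsUnit L) (hM : IsUnit M)
    (hS : M * Mᵀ = B * Lᵀ⁻¹ * L⁻¹ * Bᵀ)
    (C : Matrix (Fin p) (Fin n) ℝ) (hC : C = M⁻¹ * B * Lᵀ⁻¹)
    (Z : Matrix (Fin n ⊕ Fin p) (Fin n ⊕ Fin p) ℝ) (hZ : Z = fromBlocks 1 Cᵀ C 0)
    (Y : Matrix (Fin n ⊕ Fin p) (Fin n ⊕ Fin p) ℝ) (hY : Y = Z ^ 2) :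
    ∀ μ : ℝ, (∃ v : Fin n ⊕ Fin p → ℝ, v ≠ 0 ∧ Y.mulVec v = μ • v) →
      μ ∈ ({1, (3 + Real.sqrt 5) / 2, (3 - Real.sqrt 5) / 2} : Set ℝ) :=
  stmt_9_general n p L M B hM hS C hC Z hZ Y hY
end

section
/- Under the stated hypotheses, the preconditioned matrix Z itself satisfies the annihilating polynomial identity (Z − I)·(Z² − Z − I) = 0. -/
/-!
Cancelling `M` against `M * Mᵀ = (B * Lᵀ⁻¹) * (B * Lᵀ⁻¹)ᵀ` shows that `C` has orthonormal rows,
`C * Cᵀ = 1`. For any right inverse `D` of `C`, the matrix `Z = [[1, D], [C, 0]]` has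
`Z² - Z - 1 = [[D * C - 1, 0], [0, 0]]`, which `Z - 1 = [[0, D], [C, -1]]` annihilates because
`C * (D * C - 1) = 0`.
-/

open Matrix

namespace Matrix

theorem mul_transpose_eq_one_of_mul_transpose_eq_s10 {m n R : Type*} [Fintype m] [DecidableEq m]
    [Fintype n] [CommRing R] {M : Matrix m m R} {N : Matrix m n R} (hM : IsUnit M)
    (h : M * Mᵀ = N * Nᵀ) : (M⁻¹ * N) * (M⁻¹ * N)ᵀ = 1 := by
  have hMT : IsUnit Mᵀ := (isUnit_transpose M).mpr hM
  calc (M⁻¹ * N) * (M⁻¹ * N)ᵀ = M⁻¹ * (N * Nᵀ) * Mᵀ⁻¹ := by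
        rw [transpose_mul, transpose_nonsing_inv]; simp only [Matrix.mul_assoc]
    _ = 1 := by
        rw [← h, ← Matrix.mul_assoc, nonsing_inv_mul _ ((isUnit_iff_isUnit_det M).mp hM),
          Matrix.one_mul, mul_nonsing_inv _ ((isUnit_iff_isUnit_det Mᵀ).mp hMT)]

variable {n p R : Type*} [Fintype n] [DecidableEq n] [Fintype p] [DecidableEq p] [Ring R]

theorem fromBlocks_sq_sub_self_sub_one {C : Matrix p n R} {D : Matrix n p R} (hCD : C * D = 1) :
    fromBlocks 1 D C 0 ^ 2 - fromBlocks 1 D C 0 - 1 = fromBlocks (D * C - 1) 0 0 0 := by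
  rw [sq, fromBlocks_multiply, ← fromBlocks_one, sub_eq_add_neg, sub_eq_add_neg, fromBlocks_neg,
    fromBlocks_neg, fromBlocks_add, fromBlocks_add]
  congr 1 <;> simp [hCD, ← sub_eq_add_neg]

theorem fromBlocks_sub_one_mul_sq_sub_self_sub_one {C : Matrix p n R} {D : Matrix n p R}
    (hCD : C * D = 1) :
    (fromBlocks 1 D C 0 - 1) * (fromBlocks 1 D C 0 ^ 2 - fromBlocks 1 D C 0 - 1) = 0 := by
  rw [fromBlocks_sq_sub_self_sub_one hCD, ← fromBlocks_one, sub_eq_add_neg, fromBlocks_neg,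
    fromBlocks_add, fromBlocks_multiply, ← fromBlocks_zero]
  have hC : C * (D * C - 1) = 0 := by rw [Matrix.mul_sub, ← Matrix.mul_assoc, hCD]; simp
  congr 1 <;> simp [hC]

end Matrix

theorem stmt_10_general (n p : ℕ) (L : Matrix (Fin n) (Fin n) ℝ) (M : Matrix (Fin p) (Fin p) ℝ)
    (B : Matrix (Fin p) (Fin n) ℝ) (hM : IsUnit M)
    (hS : M * Mᵀ = B * Lᵀ⁻¹ * L⁻¹ * Bᵀ)
    (C : Matrix (Fin p) (Fin n) ℝ) (hC : C = M⁻¹ * B * Lᵀ⁻¹)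
    (Z : Matrix (Fin n ⊕ Fin p) (Fin n ⊕ Fin p) ℝ) (hZ : Z = fromBlocks 1 Cᵀ C 0) :
    (Z - 1) * (Z ^ 2 - Z - 1) = 0 := by
  have hS' : M * Mᵀ = (B * Lᵀ⁻¹) * (B * Lᵀ⁻¹)ᵀ := by
    rw [hS, transpose_mul, transpose_nonsing_inv, transpose_transpose]
    simp only [Matrix.mul_assoc]
  have hCC : C * Cᵀ = 1 := by
    rw [hC, Matrix.mul_assoc M⁻¹ B]
    exact mul_transpose_eq_one_of_mul_transpose_eq_s10 hM hS'
  rw [hZ]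
  exact fromBlocks_sub_one_mul_sq_sub_self_sub_one hCC

/-- The preconditioned matrix `Z = [[I, Cᵀ], [C, 0]]` satisfies the annihilating
polynomial identity `(Z - I) * (Z² - Z - I) = 0`. -/
theorem stmt_10 (n p : ℕ) (L : Matrix (Fin n) (Fin n) ℝ) (M : Matrix (Fin p) (Fin p) ℝ)
    (B : Matrix (Fin p) (Fin n) ℝ) (hL : IsUnit L) (hM : IsUnit M)
    (hS : M * Mᵀ = B * Lᵀ⁻¹ * L⁻¹ * Bᵀ)
    (C : Matrix (Fin p) (Fin n) ℝ) (hC : C = M⁻¹ * B * Lᵀ⁻¹)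
    (Z : Matrix (Fin n ⊕ Fin p) (Fin n ⊕ Fin p) ℝ) (hZ : Z = fromBlocks 1 Cᵀ C 0) :
    (Z - 1) * (Z ^ 2 - Z - 1) = 0 :=
  stmt_10_general n p L M B hM hS C hC Z hZ
end

section
/- Under the stated hypotheses, every real eigenvalue of the symmetric matrix Z lies in the three-element set {1, (1 + √5)/2, (1 − √5)/2}. -/
/-!
Write `v = (x, y)`. The eigenvalue equation for `Z` reads `x + Cᵀ y = μ x` and `C x = μ y`, and
the Cholesky relation says exactly that `C Cᵀ = 1`. If `y = 0` then `x ≠ 0` and `μ = 1`.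
Otherwise applying `C` to the first equation gives `μ y + y = μ² y`, so `μ² = μ + 1`, whose
roots are the golden ratio `(1 + √5)/2` and its conjugate `(1 - √5)/2`.
-/

open Matrix

namespace Matrix

variable {K m n : Type*} [Fintype m] [Fintype n] [DecidableEq m]

theorem inv_mul_mul_transpose_eq_one_of_mul_transpose_eq [CommRing K] {M : Matrix m m K}
    (hM : IsUnit M) {N : Matrix m n K} (h : M * Mᵀ = N * Nᵀ) :
    M⁻¹ * N * (M⁻¹ * N)ᵀ = 1 := by
  have hdet : IsUnit M.det := (isUnit_iff_isUnit_det M).mp hM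
  calc M⁻¹ * N * (M⁻¹ * N)ᵀ = M⁻¹ * (N * Nᵀ) * Mᵀ⁻¹ := by
        rw [transpose_mul, transpose_nonsing_inv]; simp only [Matrix.mul_assoc]
    _ = 1 := by
        rw [← h, ← Matrix.mul_assoc, nonsing_inv_mul M hdet, Matrix.one_mul,
          mul_nonsing_inv _ (by rwa [det_transpose])]

theorem eq_one_or_sq_eq_of_fromBlocks_mulVec_eq_smul [Field K] [DecidableEq n]
    {C : Matrix n m K} (hC : C * Cᵀ = 1) {μ : K} {v : m ⊕ n → K} (hv : v ≠ 0)
    (h : fromBlocks 1 Cᵀ C 0 *ᵥ v = μ • v) :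
    μ = 1 ∨ μ ^ 2 = μ + 1 := by
  obtain ⟨x, y, rfl⟩ : ∃ x y, v = Sum.elim x y := ⟨_, _, (Sum.elim_comp_inl_inr v).symm⟩
  rw [fromBlocks_mulVec] at h
  have hx : x + Cᵀ *ᵥ y = μ • x := funext fun i ↦ by simpa using congrFun h (Sum.inl i)
  have hy : C *ᵥ x = μ • y := funext fun j ↦ by simpa using congrFun h (Sum.inr j)
  by_cases hy0 : y = 0
  · left
    have hx0 : x ≠ 0 := fun hx0 ↦ hv (by rw [hx0, hy0, Sum.elim_zero_zero])
    have : (μ - 1) • x = 0 := by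
      rw [sub_smul, ← hx, hy0, mulVec_zero, add_zero, one_smul, sub_self]
    exact sub_eq_zero.mp ((smul_eq_zero.mp this).resolve_right hx0)
  · right
    have hCx : μ • y + y = μ • (μ • y) := by
      rw [← hy, ← mulVec_smul, ← hx, mulVec_add, mulVec_mulVec, hC, one_mulVec]
    have : (μ ^ 2 - μ - 1) • y = 0 := by
      rw [sub_smul, sub_smul, pow_two, mul_smul, ← hCx, one_smul]; abel
    linear_combination (smul_eq_zero.mp this).resolve_right hy0

end Matrix

namespace Real

open goldenRatio in
theorem eq_goldenRatio_or_eq_goldenConj_of_sq_eq {x : ℝ} (h : x ^ 2 = x + 1) :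
    x = φ ∨ x = ψ := by
  have : (x - φ) * (x - ψ) = 0 := by
    linear_combination h - x * goldenRatio_add_goldenConj + goldenRatio_mul_goldenConj
  simpa [sub_eq_zero] using this

end Real

theorem stmt_11_general (n p : ℕ) (L : Matrix (Fin n) (Fin n) ℝ) (M : Matrix (Fin p) (Fin p) ℝ)
    (B : Matrix (Fin p) (Fin n) ℝ) (hM : IsUnit M)
    (hS : M * Mᵀ = B * Lᵀ⁻¹ * L⁻¹ * Bᵀ)
    (C : Matrix (Fin p) (Fin n) ℝ) (hC : C = M⁻¹ * B * Lᵀ⁻¹)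
    (Z : Matrix (Fin n ⊕ Fin p) (Fin n ⊕ Fin p) ℝ) (hZ : Z = fromBlocks 1 Cᵀ C 0) :
    ∀ μ : ℝ, (∃ v : Fin n ⊕ Fin p → ℝ, v ≠ 0 ∧ Z.mulVec v = μ • v) →
      μ ∈ ({1, (1 + Real.sqrt 5) / 2, (1 - Real.sqrt 5) / 2} : Set ℝ) := by
  rintro μ ⟨v, hv, hμ⟩
  have hCC : C * Cᵀ = 1 := by
    have hN : M * Mᵀ = B * Lᵀ⁻¹ * (B * Lᵀ⁻¹)ᵀ := by
      rw [hS, transpose_mul, transpose_nonsing_inv, transpose_transpose]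
      simp only [Matrix.mul_assoc]
    simpa only [hC, Matrix.mul_assoc] using
      inv_mul_mul_transpose_eq_one_of_mul_transpose_eq hM hN
  rw [hZ] at hμ
  rcases eq_one_or_sq_eq_of_fromBlocks_mulVec_eq_smul hCC hv hμ with rfl | hsq
  · exact Or.inl rfl
  · exact Or.inr (Real.eq_goldenRatio_or_eq_goldenConj_of_sq_eq hsq)

/-- Every real eigenvalue of the symmetric matrix `Z = [[I, Cᵀ], [C, 0]]` lies in the
three-element set `{1, (1 + √5)/2, (1 - √5)/2}`. -/
theorem stmt_11 (n p : ℕ) (L : Matrix (Fin n) (Fin n) ℝ) (M : Matrix (Fin p) (Fin p) ℝ)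
    (B : Matrix (Fin p) (Fin n) ℝ) (hL : IsUnit L) (hM : IsUnit M)
    (hS : M * Mᵀ = B * Lᵀ⁻¹ * L⁻¹ * Bᵀ)
    (C : Matrix (Fin p) (Fin n) ℝ) (hC : C = M⁻¹ * B * Lᵀ⁻¹)
    (Z : Matrix (Fin n ⊕ Fin p) (Fin n ⊕ Fin p) ℝ) (hZ : Z = fromBlocks 1 Cᵀ C 0) :
    ∀ μ : ℝ, (∃ v : Fin n ⊕ Fin p → ℝ, v ≠ 0 ∧ Z.mulVec v = μ • v) →
      μ ∈ ({1, (1 + Real.sqrt 5) / 2, (1 - Real.sqrt 5) / 2} : Set ℝ) :=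
  stmt_11_general n p L M B hM hS C hC Z hZ
end

section
/- Under the stated hypotheses, the quadratic form of Y = Z² satisfies the two-sided bound ((3 − √5)/2)·‖x‖² ≤ xᵀ·Y·x ≤ ((3 + √5)/2)·‖x‖² for every real vector x of dimension n + p; in particular the spectral condition number of Y is bounded by (3 + √5)/(3 − √5), independently of n and p (i.e. of the mesh resolution). -/
/-!
The Cholesky relation says exactly that `C` has orthonormal rows, `C * Cᵀ = 1`. Since `Z` is
symmetric, `xᵀ Z² x = ‖Z x‖²`, and for `x = (u, v)` and `s = C u` this is
`Q = ‖u‖² + 2 ⟪s, v⟫ + ‖v‖² + ‖s‖²`, while `‖s‖ ≤ ‖u‖` because `Cᵀ C` is an orthogonal projection.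
The two bounds are `ψ²` and `φ²`, the squares of the roots `ψ, φ = (1 ∓ √5) / 2` of
`t² = t + 1`, and they follow from the sum-of-squares identities
`Q - ψ² ‖x‖² = -ψ (‖u‖² - ‖s‖²) + φ ‖s - ψ v‖²` and
`φ² ‖x‖² - Q = φ (‖u‖² - ‖s‖²) - ψ ‖s - φ v‖²`, all of whose coefficients are nonnegative.
-/

open Matrix Real

open scoped goldenRatio

namespace Matrix

variable {m n R : Type*} [Fintype m] [Fintype n] [DecidableEq m] [CommRing R]

theorem inv_mul_mul_transpose_eq_one_s14 {M : Matrix m m R} {K : Matrix m n R}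
    (hM : IsUnit M) (h : M * Mᵀ = K * Kᵀ) : M⁻¹ * K * (M⁻¹ * K)ᵀ = 1 := by
  have hMdet : IsUnit M.det := (isUnit_iff_isUnit_det M).1 hM
  have hMTdet : IsUnit Mᵀ.det := by rwa [det_transpose]
  calc M⁻¹ * K * (M⁻¹ * K)ᵀ = M⁻¹ * (K * Kᵀ) * Mᵀ⁻¹ := by
        simp only [transpose_mul, transpose_nonsing_inv, Matrix.mul_assoc]
    _ = (M⁻¹ * M) * (Mᵀ * Mᵀ⁻¹) := by rw [← h]; simp only [Matrix.mul_assoc]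
    _ = 1 := by rw [nonsing_inv_mul M hMdet, mul_nonsing_inv Mᵀ hMTdet, Matrix.one_mul]

theorem transpose_mulVec_dotProduct_transpose_mulVec {C : Matrix m n R} (hC : C * Cᵀ = 1)
    (v w : m → R) : Cᵀ *ᵥ v ⬝ᵥ Cᵀ *ᵥ w = v ⬝ᵥ w := by
  rw [dotProduct_mulVec, vecMul_transpose, mulVec_mulVec, hC, one_mulVec]

theorem dotProduct_sq_mulVec_of_transpose_eq [DecidableEq n] {Z : Matrix n n R} (hZ : Zᵀ = Z)
    (x : n → R) :
    x ⬝ᵥ (Z ^ 2 *ᵥ x) = Z *ᵥ x ⬝ᵥ Z *ᵥ x := by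
  rw [sq, ← mulVec_mulVec, dotProduct_mulVec, ← mulVec_transpose, hZ]

theorem sumElim_dotProduct_sq_fromBlocks_mulVec [DecidableEq n] {C : Matrix m n R}
    (hC : C * Cᵀ = 1) (u : n → R) (v : m → R) :
    Sum.elim u v ⬝ᵥ ((fromBlocks 1 Cᵀ C 0) ^ 2 *ᵥ Sum.elim u v) =
      u ⬝ᵥ u + 2 * (C *ᵥ u ⬝ᵥ v) + v ⬝ᵥ v + C *ᵥ u ⬝ᵥ C *ᵥ u := by
  have hZ : (fromBlocks 1 Cᵀ C 0)ᵀ = fromBlocks 1 Cᵀ C 0 := by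
    rw [fromBlocks_transpose, transpose_one, transpose_transpose, transpose_zero]
  have hadj : u ⬝ᵥ Cᵀ *ᵥ v = C *ᵥ u ⬝ᵥ v := by
    rw [dotProduct_mulVec, vecMul_transpose]
  rw [dotProduct_sq_mulVec_of_transpose_eq hZ, fromBlocks_mulVec]
  simp only [Sum.elim_comp_inl, Sum.elim_comp_inr, one_mulVec, zero_mulVec, add_zero,
    sumElim_dotProduct_sumElim, add_dotProduct, dotProduct_add,
    transpose_mulVec_dotProduct_transpose_mulVec hC, dotProduct_comm (Cᵀ *ᵥ v) u, hadj]
  ring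

theorem mulVec_dotProduct_mulVec_le [LinearOrder R] [IsStrictOrderedRing R] {C : Matrix m n R}
    (hC : C * Cᵀ = 1) (u : n → R) : C *ᵥ u ⬝ᵥ C *ᵥ u ≤ u ⬝ᵥ u := by
  have hproj : 0 ≤ (u - Cᵀ *ᵥ (C *ᵥ u)) ⬝ᵥ (u - Cᵀ *ᵥ (C *ᵥ u)) :=
    Finset.sum_nonneg fun i _ => mul_self_nonneg _
  have hadj : u ⬝ᵥ Cᵀ *ᵥ (C *ᵥ u) = C *ᵥ u ⬝ᵥ C *ᵥ u := by
    rw [dotProduct_mulVec, vecMul_transpose]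
  rw [sub_dotProduct, dotProduct_sub, dotProduct_sub, hadj,
    transpose_mulVec_dotProduct_transpose_mulVec hC, dotProduct_comm (Cᵀ *ᵥ (C *ᵥ u)), hadj]
    at hproj
  linarith

variable [DecidableEq n]

theorem sq_goldenConj_mul_le_dotProduct_sq_fromBlocks_mulVec {C : Matrix m n ℝ}
    (hC : C * Cᵀ = 1) (w : n ⊕ m → ℝ) :
    ψ ^ 2 * (w ⬝ᵥ w) ≤ w ⬝ᵥ ((fromBlocks 1 Cᵀ C 0) ^ 2 *ᵥ w) := by
  obtain ⟨u, v, rfl⟩ : ∃ u v, w = Sum.elim u v := ⟨_, _, (Sum.elim_comp_inl_inr w).symm⟩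
  rw [sumElim_dotProduct_sq_fromBlocks_mulVec hC, sumElim_dotProduct_sumElim]
  set s := C *ᵥ u
  have hproj : s ⬝ᵥ s ≤ u ⬝ᵥ u := mulVec_dotProduct_mulVec_le hC u
  have hsq : 0 ≤ (s - ψ • v) ⬝ᵥ (s - ψ • v) := Finset.sum_nonneg fun i _ => mul_self_nonneg _
  simp only [sub_dotProduct, dotProduct_sub, smul_dotProduct, dotProduct_smul, smul_eq_mul,
    dotProduct_comm v s] at hsq
  have key : u ⬝ᵥ u + 2 * (s ⬝ᵥ v) + v ⬝ᵥ v + s ⬝ᵥ s - ψ ^ 2 * (u ⬝ᵥ u + v ⬝ᵥ v) =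
      -ψ * (u ⬝ᵥ u - s ⬝ᵥ s) + φ * (s ⬝ᵥ s - 2 * ψ * (s ⬝ᵥ v) + ψ ^ 2 * (v ⬝ᵥ v)) := by
    linear_combination (-(u ⬝ᵥ u + v ⬝ᵥ v)) * goldenConj_sq +
      (2 * (s ⬝ᵥ v) - ψ * (v ⬝ᵥ v)) * goldenRatio_mul_goldenConj -
      (s ⬝ᵥ s) * goldenRatio_add_goldenConj
  linarith [mul_nonneg (neg_nonneg.2 goldenConj_neg.le) (sub_nonneg.2 hproj),
    mul_nonneg goldenRatio_pos.le hsq]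

theorem dotProduct_sq_fromBlocks_mulVec_le_sq_goldenRatio_mul {C : Matrix m n ℝ}
    (hC : C * Cᵀ = 1) (w : n ⊕ m → ℝ) :
    w ⬝ᵥ ((fromBlocks 1 Cᵀ C 0) ^ 2 *ᵥ w) ≤ φ ^ 2 * (w ⬝ᵥ w) := by
  obtain ⟨u, v, rfl⟩ : ∃ u v, w = Sum.elim u v := ⟨_, _, (Sum.elim_comp_inl_inr w).symm⟩
  rw [sumElim_dotProduct_sq_fromBlocks_mulVec hC, sumElim_dotProduct_sumElim]
  set s := C *ᵥ u
  have hproj : s ⬝ᵥ s ≤ u ⬝ᵥ u := mulVec_dotProduct_mulVec_le hC u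
  have hsq : 0 ≤ (s - φ • v) ⬝ᵥ (s - φ • v) := Finset.sum_nonneg fun i _ => mul_self_nonneg _
  simp only [sub_dotProduct, dotProduct_sub, smul_dotProduct, dotProduct_smul, smul_eq_mul,
    dotProduct_comm v s] at hsq
  have key : φ ^ 2 * (u ⬝ᵥ u + v ⬝ᵥ v) - (u ⬝ᵥ u + 2 * (s ⬝ᵥ v) + v ⬝ᵥ v + s ⬝ᵥ s) =
      φ * (u ⬝ᵥ u - s ⬝ᵥ s) - ψ * (s ⬝ᵥ s - 2 * φ * (s ⬝ᵥ v) + φ ^ 2 * (v ⬝ᵥ v)) := by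
    linear_combination (u ⬝ᵥ u + v ⬝ᵥ v) * goldenRatio_sq +
      (φ * (v ⬝ᵥ v) - 2 * (s ⬝ᵥ v)) * goldenRatio_mul_goldenConj +
      (s ⬝ᵥ s) * goldenRatio_add_goldenConj
  linarith [mul_nonneg goldenRatio_pos.le (sub_nonneg.2 hproj),
    mul_nonneg (neg_nonneg.2 goldenConj_neg.le) hsq]

end Matrix

theorem stmt_14_general (n p : ℕ) (L : Matrix (Fin n) (Fin n) ℝ) (M : Matrix (Fin p) (Fin p) ℝ)
    (B : Matrix (Fin p) (Fin n) ℝ) (hM : IsUnit M)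
    (hS : M * Mᵀ = B * Lᵀ⁻¹ * L⁻¹ * Bᵀ)
    (C : Matrix (Fin p) (Fin n) ℝ) (hC : C = M⁻¹ * B * Lᵀ⁻¹)
    (Z : Matrix (Fin n ⊕ Fin p) (Fin n ⊕ Fin p) ℝ) (hZ : Z = fromBlocks 1 Cᵀ C 0)
    (Y : Matrix (Fin n ⊕ Fin p) (Fin n ⊕ Fin p) ℝ) (hY : Y = Z ^ 2) :
    ∀ x : EuclideanSpace ℝ (Fin n ⊕ Fin p),
      ((3 - Real.sqrt 5) / 2) * ‖x‖ ^ 2 ≤ (x : Fin n ⊕ Fin p → ℝ) ⬝ᵥ Y.mulVec x ∧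
      (x : Fin n ⊕ Fin p → ℝ) ⬝ᵥ Y.mulVec x ≤ ((3 + Real.sqrt 5) / 2) * ‖x‖ ^ 2 := by
  have hCC : C * Cᵀ = 1 := by
    rw [hC, Matrix.mul_assoc M⁻¹]
    refine inv_mul_mul_transpose_eq_one_s14 hM ?_
    rw [hS, transpose_mul, transpose_nonsing_inv, transpose_transpose, ← Matrix.mul_assoc]
  have hψ : (3 - √5) / 2 = ψ ^ 2 := by rw [goldenConj_sq]; ring
  have hφ : (3 + √5) / 2 = φ ^ 2 := by rw [goldenRatio_sq]; ring
  intro x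
  have hnorm : ‖x‖ ^ 2 = (x : Fin n ⊕ Fin p → ℝ) ⬝ᵥ x := by
    rw [EuclideanSpace.real_norm_sq_eq]
    simp only [dotProduct, sq]
  rw [hnorm, hψ, hφ, hY, hZ]
  exact ⟨sq_goldenConj_mul_le_dotProduct_sq_fromBlocks_mulVec hCC x,
    dotProduct_sq_fromBlocks_mulVec_le_sq_goldenRatio_mul hCC x⟩

/-- Two-sided bound for the quadratic form of `Y = Z²`:
`((3 - √5)/2)·‖x‖² ≤ xᵀ·Y·x ≤ ((3 + √5)/2)·‖x‖²` for every vector `x` (Euclidean norm),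
independently of `n` and `p` (i.e. of the mesh resolution). -/
theorem stmt_14 (n p : ℕ) (L : Matrix (Fin n) (Fin n) ℝ) (M : Matrix (Fin p) (Fin p) ℝ)
    (B : Matrix (Fin p) (Fin n) ℝ) (hL : IsUnit L) (hM : IsUnit M)
    (hS : M * Mᵀ = B * Lᵀ⁻¹ * L⁻¹ * Bᵀ)
    (C : Matrix (Fin p) (Fin n) ℝ) (hC : C = M⁻¹ * B * Lᵀ⁻¹)
    (Z : Matrix (Fin n ⊕ Fin p) (Fin n ⊕ Fin p) ℝ) (hZ : Z = fromBlocks 1 Cᵀ C 0)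
    (Y : Matrix (Fin n ⊕ Fin p) (Fin n ⊕ Fin p) ℝ) (hY : Y = Z ^ 2) :
    ∀ x : EuclideanSpace ℝ (Fin n ⊕ Fin p),
      ((3 - Real.sqrt 5) / 2) * ‖x‖ ^ 2 ≤ (x : Fin n ⊕ Fin p → ℝ) ⬝ᵥ Y.mulVec x ∧
      (x : Fin n ⊕ Fin p → ℝ) ⬝ᵥ Y.mulVec x ≤ ((3 + Real.sqrt 5) / 2) * ‖x‖ ^ 2 :=
  stmt_14_general n p L M B hM hS C hC Z hZ Y hY
end
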